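/- arXiv:2406.06297 — 5 statements merged into one kernel-verified Lean document; each statement's English description precedes it below -/
import Mathlib

section
/- For θ ∈ [-π, π], the function f(θ) = sin θ + sin(θ/2) attains its maximum value ν = sin χ + sin(χ/2) at θ = χ and its minimum value -ν at θ = -χ, where χ = 2·arccos((-1 + √33)/8). -/
/-!
With `t = θ / 2 ∈ [-π/2, π/2]` we have `sin θ + sin (θ / 2) = sin t * (2 * cos t + 1)` and
`cos t ≥ 0`, so the square of the function is `g (cos t)` with `g c = (1 - c²)(2c + 1)²`. Since
`g' = -2 (2c + 1)(4c² + c - 2)`, the positive root `c₀ = (-1 + √33)/8` of `4c² + c - 2` gives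
`g c₀ - g c = (c - c₀)² · q c` with `q` positive for `c ≥ 0`; the value `±√(g c₀)` is attained at
`θ = ±2 arccos c₀`.
-/

open Real

theorem sin_add_sin_half (θ : ℝ) :
    sin θ + sin (θ / 2) = sin (θ / 2) * (2 * cos (θ / 2) + 1) := by
  nth_rw 1 [← mul_div_cancel₀ θ (two_ne_zero' ℝ), sin_two_mul]
  ring

theorem one_sub_sq_mul_two_mul_add_one_sq_le {c c₀ : ℝ} (h₀ : 4 * c₀ ^ 2 + c₀ - 2 = 0)
    (hc₀ : 0 ≤ c₀) (hc : 0 ≤ c) :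
    (1 - c ^ 2) * (2 * c + 1) ^ 2 ≤ (1 - c₀ ^ 2) * (2 * c₀ + 1) ^ 2 := by
  have hfactor : (1 - c₀ ^ 2) * (2 * c₀ + 1) ^ 2 - (1 - c ^ 2) * (2 * c + 1) ^ 2
      = (c - c₀) ^ 2 * (4 * c ^ 2 + (8 * c₀ + 4) * c + 5 * c₀ + 3) := by
    linear_combination (3 * (c - c₀) ^ 2 + 2 * (c - c₀) * (2 * c₀ + 1)) * h₀
  have : 0 ≤ (c - c₀) ^ 2 * (4 * c ^ 2 + (8 * c₀ + 4) * c + 5 * c₀ + 3) := by positivity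
  linarith

theorem abs_sin_add_sin_half_le {θ c₀ : ℝ} (hθ : θ ∈ Set.Icc (-π) π)
    (h₀ : 4 * c₀ ^ 2 + c₀ - 2 = 0) (hc₀ : 0 ≤ c₀) :
    |sin θ + sin (θ / 2)| ≤ sin (2 * arccos c₀) + sin (arccos c₀) := by
  have hc₀_le : c₀ ≤ 1 := by nlinarith
  have hcos : 0 ≤ cos (θ / 2) :=
    cos_nonneg_of_mem_Icc ⟨by linarith [hθ.1], by linarith [hθ.2]⟩
  have hmax : sin (2 * arccos c₀) + sin (arccos c₀) = √(1 - c₀ ^ 2) * (2 * c₀ + 1) := by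
    have h := sin_add_sin_half (2 * arccos c₀)
    rw [mul_div_cancel_left₀ _ (two_ne_zero' ℝ)] at h
    rw [h, sin_arccos, cos_arccos (by linarith) hc₀_le]
  rw [hmax, sin_add_sin_half]
  refine abs_le_of_sq_le_sq ?_ (by positivity)
  calc (sin (θ / 2) * (2 * cos (θ / 2) + 1)) ^ 2
      = (1 - cos (θ / 2) ^ 2) * (2 * cos (θ / 2) + 1) ^ 2 := by rw [← sin_sq]; ring
    _ ≤ (1 - c₀ ^ 2) * (2 * c₀ + 1) ^ 2 := one_sub_sq_mul_two_mul_add_one_sq_le h₀ hc₀ hcos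
    _ = (√(1 - c₀ ^ 2) * (2 * c₀ + 1)) ^ 2 := by
      rw [mul_pow, sq_sqrt (by nlinarith)]

theorem max_min_of_sin_add_sin_half
    (χ ν : ℝ) (hχ : χ = 2 * arccos ((-1 + Real.sqrt 33) / 8))
    (hν : ν = sin χ + sin (χ / 2)) :
    (∀ θ ∈ Set.Icc (-π) π, sin θ + sin (θ / 2) ≤ ν ∧ -ν ≤ sin θ + sin (θ / 2)) ∧
    χ ∈ Set.Icc (-π) π ∧ (-χ) ∈ Set.Icc (-π) π ∧
    sin χ + sin (χ / 2) = ν ∧ sin (-χ) + sin (-χ / 2) = -ν := by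
  set c₀ := (-1 + √33) / 8
  have h33 : √33 ^ 2 = 33 := sq_sqrt (by norm_num)
  have hc₀ : 0 ≤ c₀ := div_nonneg (by nlinarith [sqrt_nonneg 33]) (by norm_num)
  have h₀ : 4 * c₀ ^ 2 + c₀ - 2 = 0 := by linear_combination h33 / 16
  have hχ₀ : 0 ≤ χ := by rw [hχ]; linarith [arccos_nonneg c₀]
  have hχπ : χ ≤ π := by rw [hχ]; linarith [arccos_le_pi_div_two.2 hc₀]
  have hbound (θ : ℝ) (hθ : θ ∈ Set.Icc (-π) π) : |sin θ + sin (θ / 2)| ≤ ν := by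
    rw [hν, hχ, mul_div_cancel_left₀ _ (two_ne_zero' ℝ)]
    exact abs_sin_add_sin_half_le hθ h₀ hc₀
  refine ⟨fun θ hθ => (abs_le.1 (hbound θ hθ)).symm, ⟨by linarith [pi_pos], hχπ⟩,
    ⟨by linarith, by linarith [pi_pos]⟩, hν.symm, ?_⟩
  rw [neg_div, sin_neg, sin_neg, hν]
  ring
end

section
/- If |ω₁ - ω₂|/(2c) ≤ ν, then there exists θ ∈ [-χ, χ] such that sin θ + sin(θ/2) = (ω₁ - ω₂)/(2c). -/
open Real Set

theorem Function.Odd.exists_mem_Icc_eq_of_abs_le {δ : Type*} [AddCommGroup δ] [LinearOrder δ]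
    [IsOrderedAddMonoid δ] [TopologicalSpace δ] [OrderClosedTopology δ] {f : ℝ → δ}
    (hodd : Function.Odd f) {a : ℝ} (ha : 0 ≤ a) (hf : ContinuousOn f (Icc (-a) a)) {t : δ}
    (ht : |t| ≤ f a) : ∃ θ ∈ Icc (-a) a, f θ = t := by
  have hmem : t ∈ Icc (f (-a)) (f a) := by
    rw [hodd]
    exact abs_le.mp ht
  exact intermediate_value_Icc (by linarith) hf hmem

theorem odd_sin_add_sin_half : Function.Odd fun θ : ℝ ↦ sin θ + sin (θ / 2) := fun θ ↦ by
  simp only [sin_neg, neg_div]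
  ring

theorem exists_solution_in_Icc_chi
    (c ω₁ ω₂ χ ν : ℝ) (hc : 0 < c)
    (hχ : χ = 2 * arccos ((-1 + Real.sqrt 33) / 8))
    (hν : ν = sin χ + sin (χ / 2))
    (h : |ω₁ - ω₂| / (2 * c) ≤ ν) :
    ∃ θ ∈ Set.Icc (-χ) χ, sin θ + sin (θ / 2) = (ω₁ - ω₂) / (2 * c) := by
  have hχ_nonneg : 0 ≤ χ := hχ ▸ mul_nonneg zero_le_two (arccos_nonneg _)
  have habs : |(ω₁ - ω₂) / (2 * c)| ≤ ν := by
    rwa [abs_div, abs_of_pos (by positivity : (0 : ℝ) < 2 * c)]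
  subst hν
  exact odd_sin_add_sin_half.exists_mem_Icc_eq_of_abs_le hχ_nonneg (by fun_prop) habs
end

section
/- Under the assumptions of Theorem 1 (three all-to-all coupled Kuramoto oscillators, |ω₁ - ω₂|/(2c) < ν, ω₃ = (ω₁+ω₂)/2), there exists a phase-locked configuration with |θ₁ - θ₂| ≤ χ < 2π/3. -/
/-!
Look for a locked state of the symmetric form `θ = (a, -a, 0)`. With `ω₃` the mean of `ω₁` and
`ω₂`, both locking conditions reduce to `2c (sin 2a + sin a) = ω₁ - ω₂`. The function
`sin 2a + sin a` is odd and equals `ν` at `a = χ/2`, so the intermediate value theorem solves this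
equation with `|a| ≤ χ/2`, i.e. `|θ₁ - θ₂| ≤ χ`. Finally `χ < 2π/3` because
`cos (χ/2) = (√33 - 1)/8 > 1/2`.
-/

open Real Set

theorem exists_mem_Icc_sin_two_mul_add_sin_eq {t y : ℝ} (ht : 0 ≤ t)
    (hy : |y| ≤ sin (2 * t) + sin t) :
    ∃ a ∈ Icc (-t) t, sin (2 * a) + sin a = y := by
  have hcont : ContinuousOn (fun a : ℝ => sin (2 * a) + sin a) (Icc (-t) t) := by fun_prop
  have hneg : sin (2 * -t) + sin (-t) = -(sin (2 * t) + sin t) := by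
    rw [mul_neg, sin_neg, sin_neg]; ring
  have hy' : y ∈ Icc (sin (2 * -t) + sin (-t)) (sin (2 * t) + sin t) := by
    rw [hneg]; exact abs_le.mp hy
  exact intermediate_value_Icc (by linarith) hcont hy'

theorem kuramoto_three_symmetric_locked {c ω₁ ω₂ ω₃ a : ℝ}
    (ha : 2 * c * (sin (2 * a) + sin a) = ω₁ - ω₂) (hω₃ : ω₃ = (ω₁ + ω₂) / 2) :
    (ω₁ + c * (sin (-a - a) + sin (0 - a))) = (ω₂ + c * (sin (a - -a) + sin (0 - -a))) ∧
      (ω₁ + c * (sin (-a - a) + sin (0 - a))) = (ω₃ + c * (sin (a - 0) + sin (-a - 0))) := by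
  have h₁ : -a - a = -(2 * a) := by ring
  have h₂ : a - -a = 2 * a := by ring
  simp only [h₁, h₂, zero_sub, sub_zero, neg_neg, sin_neg]
  constructor
  · linear_combination -ha
  · rw [hω₃]; linear_combination (-1 / 2 : ℝ) * ha

theorem arccos_sqrt_thirtythree_lt_pi_div_three :
    arccos ((-1 + √33) / 8) < π / 3 := by
  have h33 : (0 : ℝ) ≤ 33 := by norm_num
  have h5 : 5 < √33 := by nlinarith [sq_sqrt h33, sqrt_nonneg 33]
  have h6 : √33 < 6 := by nlinarith [sq_sqrt h33, sqrt_nonneg 33]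
  calc arccos ((-1 + √33) / 8) < arccos (1 / 2) :=
        strictAntiOn_arccos ⟨by norm_num, by norm_num⟩ ⟨by linarith, by linarith⟩ (by linarith)
    _ = π / 3 := by
      rw [← cos_pi_div_three]; exact arccos_cos (by positivity) (by linarith [pi_pos])

theorem kuramoto_three_exists_phase_locked
    (c ω₁ ω₂ ω₃ χ ν : ℝ) (hc : 0 < c)
    (hχ : χ = 2 * arccos ((-1 + Real.sqrt 33) / 8))
    (hν : ν = sin χ + sin (χ / 2))
    (hfreq : |ω₁ - ω₂| / (2 * c) < ν)
    (hω₃ : ω₃ = (ω₁ + ω₂) / 2) :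
    ∃ θ₁ θ₂ θ₃ : ℝ,
      (ω₁ + c * (sin (θ₂ - θ₁) + sin (θ₃ - θ₁)))
        = (ω₂ + c * (sin (θ₁ - θ₂) + sin (θ₃ - θ₂))) ∧
      (ω₁ + c * (sin (θ₂ - θ₁) + sin (θ₃ - θ₁)))
        = (ω₃ + c * (sin (θ₁ - θ₃) + sin (θ₂ - θ₃))) ∧
      |θ₁ - θ₂| ≤ χ ∧ χ < 2 * π / 3 := by
  have h2c : 0 < 2 * c := by linarith
  have hχ0 : 0 ≤ χ / 2 := by rw [hχ]; linarith [arccos_nonneg ((-1 + √33) / 8)]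
  have hy : |(ω₁ - ω₂) / (2 * c)| ≤ sin (2 * (χ / 2)) + sin (χ / 2) := by
    rw [abs_div, abs_of_pos h2c, mul_div_cancel₀ χ two_ne_zero, ← hν]
    exact hfreq.le
  obtain ⟨a, ha, hsin⟩ := exists_mem_Icc_sin_two_mul_add_sin_eq hχ0 hy
  have hlock : 2 * c * (sin (2 * a) + sin a) = ω₁ - ω₂ := by
    rw [hsin]; field_simp
  refine ⟨a, -a, 0, ?_, ?_, ?_, ?_⟩
  · exact (kuramoto_three_symmetric_locked hlock hω₃).1
  · exact (kuramoto_three_symmetric_locked hlock hω₃).2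
  · rw [sub_neg_eq_add, ← two_mul, abs_le]
    constructor <;> linarith [ha.1, ha.2]
  · rw [hχ]; linarith [arccos_sqrt_thirtythree_lt_pi_div_three]
end

section
/- Among all configurations of the form (θ₁ - θ₂, ε) with ε = θ₃ - arg(e^{iθ₁} + e^{iθ₂}) satisfying the phase-lock equation 2 sin(θ₁-θ₂) + 2 sin((θ₁-θ₂)/2)·cos ε = (ω₁-ω₂)/c with (θ₁-θ₂)/2 ∈ [0, π/2] and (ω₁-ω₂)/c ∈ (0, 2ν], the value of |θ₁ - θ₂| is minimized when cos ε = 1, i.e., ε = 0. -/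
open Real

lemma aux_strictMonoOn (χ : ℝ)
    (hχ : χ = 2 * arccos ((-1 + Real.sqrt 33) / 8)) :
    StrictMonoOn (fun t => 2 * Real.sin t + 2 * Real.sin (t / 2)) (Set.Icc 0 χ) := by
  have hs : Real.sqrt 33 ^ 2 = 33 := Real.sq_sqrt (by norm_num)
  have hs5 : (5:ℝ) < Real.sqrt 33 := by nlinarith [Real.sqrt_nonneg 33]
  have hs6 : Real.sqrt 33 < 6 := by nlinarith [Real.sqrt_nonneg 33]
  set r : ℝ := (-1 + Real.sqrt 33) / 8 with hr
  have hr0 : 0 < r := by rw [hr]; linarith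
  have hr1 : r < 1 := by rw [hr]; linarith
  apply strictMonoOn_of_deriv_pos (convex_Icc 0 χ)
  · exact Continuous.continuousOn (by continuity)
  · intro t ht
    rw [interior_Icc] at ht
    have hd : HasDerivAt (fun t => 2 * Real.sin t + 2 * Real.sin (t / 2))
        (2 * Real.cos t + 2 * (Real.cos (t / 2) * (1 / 2))) t := by
      have h1 := (Real.hasDerivAt_sin t).const_mul 2
      have h2 : HasDerivAt (fun t : ℝ => t / 2) (1 / 2) t := (hasDerivAt_id t).div_const 2
      exact (by have h3 := ((Real.hasDerivAt_sin (t / 2)).comp t h2).const_mul 2; exact h1.add h3)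
    rw [hd.deriv]
    -- cos (t/2) > r
    have hχ2 : χ / 2 = arccos r := by rw [hχ]; ring
    have ht2 : t / 2 < arccos r := by rw [← hχ2]; linarith [ht.2]
    have hc : r < Real.cos (t / 2) := by
      have := Real.cos_lt_cos_of_nonneg_of_le_pi (by linarith [ht.1] : (0:ℝ) ≤ t / 2)
        (Real.arccos_le_pi r) ht2
      rwa [Real.cos_arccos (by linarith) (by linarith)] at this
    have hcos : Real.cos t = 2 * Real.cos (t / 2) ^ 2 - 1 := by
      have h2 : t = 2 * (t / 2) := by ring
      rw [h2, Real.cos_two_mul]; ring_nf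
    rw [hcos]
    have hrroot : 4 * r ^ 2 + r - 2 = 0 := by
      rw [hr]; field_simp; nlinarith
    nlinarith [hc, hrroot]

theorem min_phase_difference_at_eps_zero
    (c ω₁ ω₂ χ ν K : ℝ) (hc : 0 < c) (hω : ω₂ < ω₁)
    (hχ : χ = 2 * arccos ((-1 + Real.sqrt 33) / 8))
    (hν : ν = sin χ + sin (χ / 2))
    (hK : K = (ω₁ - ω₂) / c) (hKpos : 0 < K) (hKle : K ≤ 2 * ν)
    (θ ε : ℝ) (hθ : θ ∈ Set.Icc 0 π)
    (hlock : 2 * sin θ + 2 * sin (θ / 2) * cos ε = K)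
    (θ' : ℝ) (hθ' : θ' ∈ Set.Icc 0 χ)
    (hlock' : 2 * sin θ' + 2 * sin (θ' / 2) = K) :
    θ' ≤ θ := by
  by_contra h
  push_neg at h
  have hθχ : θ ∈ Set.Icc 0 χ := ⟨hθ.1, le_trans h.le hθ'.2⟩
  have hmono := aux_strictMonoOn χ hχ hθχ hθ' h
  -- f θ < f θ' = K, but K ≤ f θ
  have hsin : 0 ≤ sin (θ / 2) :=
    Real.sin_nonneg_of_nonneg_of_le_pi (by linarith [hθ.1]) (by linarith [hθ.2, Real.pi_pos])
  have hce : cos ε ≤ 1 := Real.cos_le_one ε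
  have hKle' : K ≤ 2 * sin θ + 2 * sin (θ / 2) := by nlinarith
  simp only at hmono
  linarith [hlock' ▸ hmono]
end

section
/- The 2×2 matrix J(a) = c·[[-2cos a - cos(a/2), 0],[-cos a + cos(a/2), -2cos(a/2) - cos(a/2)]] obtained by substituting b = a/2 into J(a,b) = c·[[-2cos a - cos(a-b), -cos b + cos(a-b)],[-cos a + cos(a-b), -2cos b - cos(a-b)]] is lower triangular with diagonal entries c·(-2cos a - cos(a/2)) and -3c·cos(a/2), and both are negative for |a| < χ and c > 0; hence both eigenvalues of J are negative. -/
/-! At `b = a / 2` the off-diagonal entry `-cos b + cos (a - b)` vanishes, so `J` is lower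
triangular and its eigenvalues are its diagonal entries. Writing `x = cos (a / 2)`, these are
`-c (4x² + x - 2)` and `-3cx`, and `|a| < χ` forces `x` to exceed the positive root
`(-1 + √33) / 8` of `4x² + x - 2`. -/

open Real Matrix

namespace Matrix

theorem isLowerTriangular_of_fin_two {R : Type*} [Zero R] {A : Matrix (Fin 2) (Fin 2) R}
    (h : A 0 1 = 0) : A.IsLowerTriangular := by
  intro i j hij
  rw [OrderDual.toDual_lt_toDual] at hij
  fin_cases i <;> fin_cases j <;> simp_all

variable {n R : Type*} [Fintype n] [DecidableEq n] [LinearOrder n] [CommRing R] [IsDomain R]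

theorem hasEigenvalue_toLin'_iff_of_isLowerTriangular {A : Matrix n n R}
    (hA : A.IsLowerTriangular) {μ : R} :
    Module.End.HasEigenvalue A.toLin' μ ↔ ∃ i, A i i = μ := by
  have hcharpoly : Aᵀ.charpoly = ∏ i, (Polynomial.X - Polynomial.C (A i i)) :=
    charpoly_of_isUpperTriangular Aᵀ hA.transpose
  rw [Module.End.hasEigenvalue_iff_isRoot_charpoly, Matrix.charpoly_toLin',
    ← charpoly_transpose, hcharpoly, Polynomial.IsRoot,
    Polynomial.eval_prod, Finset.prod_eq_zero_iff]
  simp [sub_eq_zero, eq_comm]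

end Matrix

theorem Real.lt_cos_of_abs_lt_arccos {t x : ℝ} (ht₀ : -1 ≤ t) (ht₁ : t ≤ 1)
    (hx : |x| < arccos t) : t < cos x := by
  simpa [cos_arccos ht₀ ht₁] using
    cos_lt_cos_of_nonneg_of_le_pi (abs_nonneg x) (arccos_le_pi t) hx

theorem four_mul_sq_add_sub_two_pos {x : ℝ} (hx : (-1 + √33) / 8 < x) :
    0 < 4 * x ^ 2 + x - 2 := by
  nlinarith [sq_sqrt (show (0 : ℝ) ≤ 33 by norm_num), sqrt_nonneg 33]

theorem Real.two_mul_cos_add_cos_half (a : ℝ) :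
    2 * cos a + cos (a / 2) = 4 * cos (a / 2) ^ 2 + cos (a / 2) - 2 := by
  rw [cos_sq, mul_div_cancel₀ a two_ne_zero]; ring

theorem jacobian_triangular_neg_eigenvalues
    (c a χ : ℝ) (hc : 0 < c)
    (hχ : χ = 2 * arccos ((-1 + Real.sqrt 33) / 8))
    (ha : |a| < χ) :
    let J : Matrix (Fin 2) (Fin 2) ℝ :=
      c • !![-2 * cos a - cos (a - a / 2), -cos (a / 2) + cos (a - a / 2);
             -cos a + cos (a - a / 2), -2 * cos (a / 2) - cos (a - a / 2)]
    J 0 1 = 0 ∧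
    J 0 0 = c * (-2 * cos a - cos (a / 2)) ∧
    J 1 1 = -3 * c * cos (a / 2) ∧
    J 0 0 < 0 ∧ J 1 1 < 0 ∧
    ∀ μ : ℝ, Module.End.HasEigenvalue (Matrix.toLin' J) μ → μ < 0 := by
  intro J
  have h33 : 5 < √33 := by rw [lt_sqrt] <;> norm_num
  have h33' : √33 < 9 := by rw [sqrt_lt'] <;> norm_num
  have hcos : (-1 + √33) / 8 < cos (a / 2) :=
    lt_cos_of_abs_lt_arccos (by linarith) (by linarith) (by rw [abs_div, abs_two]; linarith)
  have hcos_pos : 0 < cos (a / 2) := by linarith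
  have hsum_pos : 0 < 2 * cos a + cos (a / 2) := by
    rw [two_mul_cos_add_cos_half]; exact four_mul_sq_add_sub_two_pos hcos
  have hhalf : a - a / 2 = a / 2 := by ring
  have hJ01 : J 0 1 = 0 := by simp [J, hhalf]
  have hJ00 : J 0 0 = c * (-2 * cos a - cos (a / 2)) := by simp [J, hhalf]
  have hJ11 : J 1 1 = -3 * c * cos (a / 2) := by
    simp only [J, hhalf, smul_of, smul_cons, smul_eq_mul, smul_empty, of_apply, cons_val',
      cons_val_one, cons_val_fin_one]
    ring
  have hJ00_neg : J 0 0 < 0 := by rw [hJ00]; nlinarith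
  have hJ11_neg : J 1 1 < 0 := by rw [hJ11]; nlinarith
  refine ⟨hJ01, hJ00, hJ11, hJ00_neg, hJ11_neg, fun μ hμ => ?_⟩
  obtain ⟨i, rfl⟩ :=
    (hasEigenvalue_toLin'_iff_of_isLowerTriangular (isLowerTriangular_of_fin_two hJ01)).1 hμ
  fin_cases i
  exacts [hJ00_neg, hJ11_neg]
end
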